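/- Let N be a positive integer, let K and K̃ be N×N real symmetric positive semidefinite matrices whose entries satisfy |K̃ᵢⱼ − Kᵢⱼ| ≤ ε̃ for all indices i, j, where ε̃ ≥ 0; let λ > 0; let k, k̃ ∈ ℝ^N satisfy |k̃ᵢ − kᵢ| ≤ ε̃ for every index i; let c, c̃ ∈ ℝ satisfy |c − c̃| ≤ ε̃; let y ∈ ℝ^N, let f ∈ ℝ, let B, R ≥ 0 and δ ∈ (0,1). Define μ := kᵀ(K + λI)⁻¹ y and μ̃ := k̃ᵀ(K̃ + λI)⁻¹ y, σ² := c − kᵀ(K + λI)⁻¹ k and σ̃² := c̃ − k̃ᵀ(K̃ + λI)⁻¹ k̃, β̃ := B + R·√(log det(K̃ + λI) − 2·log δ) and β̄ := B + R·√(log det(K + (N·ε̃ + λ)·I) − 2·log δ), C := (1/λ + ‖(K + λI)⁻¹‖)·(‖k‖ + √N·ε̃) + ‖(K + λI)⁻¹‖·√N·ε̃, and S² := ε̃ + √N·ε̃·‖(K + λI)⁻¹ k‖ + (√N·ε̃ + ‖k‖)·C. Assume σ̃² ≥ 0 and log det(K̃ + λI) − 2·log δ ≥ 0. If |μ̃ −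 f| ≤ β̃·√(σ̃²), then |μ − f| ≤ β̄·√(σ² + S²) + C·‖y‖. -/

import Mathlib

/-!
The triangle inequality splits `|μ - f|` into `|μ̃ - f|`, which the hypothesis controls, and
`|μ| + |μ̃|`, which is at most `C ‖y‖` since `‖(K̃ + λI)⁻¹‖ ≤ 1/λ` and `‖k̃‖ ≤ ‖k‖ + √N ε̃`.
The confidence scale can only grow: entrywise closeness gives `K̃ ≤ K + N ε̃ I` in the Loewner
order and the determinant is monotone on positive definite matrices, so `β̃ ≤ β̄`.
Finally `σ̃² ≤ c̃ ≤ c + ε̃` and `kᵀ(K + λI)⁻¹k ≤ ‖k‖ C`, so `σ̃² ≤ σ² + S²`.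
-/

open Matrix MeasureTheory

/-- Operator norm of an `N × N` real matrix induced by the Euclidean norm on `ℝ^N`. -/
noncomputable def opNorm {N : ℕ} (M : Matrix (Fin N) (Fin N) ℝ) : ℝ :=
  ‖Matrix.toEuclideanCLM (𝕜 := ℝ) M‖

/-- Euclidean norm of a vector in `ℝ^N`. -/
noncomputable def evnorm {N : ℕ} (v : Fin N → ℝ) : ℝ :=
  Real.sqrt (∑ i, (v i) ^ 2)

/-- The constant `C = (1/λ + ‖(K+λI)⁻¹‖)(‖k‖ + √N ε̃) + ‖(K+λI)⁻¹‖ √N ε̃`. -/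
noncomputable def Cbound {N : ℕ} (K : Matrix (Fin N) (Fin N) ℝ) (k : Fin N → ℝ)
    (lam ε : ℝ) : ℝ :=
  (1 / lam + opNorm (K + lam • 1)⁻¹) * (evnorm k + Real.sqrt N * ε) +
    opNorm (K + lam • 1)⁻¹ * (Real.sqrt N * ε)

/-- The constant `S² = ε̃ + √N ε̃ ‖(K+λI)⁻¹ k‖ + (√N ε̃ + ‖k‖) C`. -/
noncomputable def Ssq {N : ℕ} (K : Matrix (Fin N) (Fin N) ℝ) (k : Fin N → ℝ)
    (lam ε : ℝ) : ℝ :=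
  ε + Real.sqrt N * ε * evnorm ((K + lam • 1)⁻¹ *ᵥ k) +
    (Real.sqrt N * ε + evnorm k) * Cbound K k lam ε

open WithLp

section EuclideanNorm

variable {N : ℕ}

lemma evnorm_eq_norm_toLp (v : Fin N → ℝ) : evnorm v = ‖toLp 2 v‖ := by
  simp [evnorm, EuclideanSpace.norm_eq, sq_abs]

lemma evnorm_nonneg (v : Fin N → ℝ) : 0 ≤ evnorm v := Real.sqrt_nonneg _

lemma dotProduct_self_eq_evnorm_sq (v : Fin N → ℝ) : v ⬝ᵥ v = evnorm v ^ 2 := by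
  rw [evnorm_eq_norm_toLp, ← real_inner_self_eq_norm_sq, EuclideanSpace.inner_toLp_toLp]
  simp

lemma abs_dotProduct_le_evnorm_mul (u v : Fin N → ℝ) : |u ⬝ᵥ v| ≤ evnorm u * evnorm v := by
  have h := abs_real_inner_le_norm (toLp 2 v) (toLp 2 u)
  rwa [EuclideanSpace.inner_toLp_toLp, star_trivial, mul_comm, ← evnorm_eq_norm_toLp,
    ← evnorm_eq_norm_toLp] at h

lemma evnorm_add_le (u v : Fin N → ℝ) : evnorm (u + v) ≤ evnorm u + evnorm v := by
  simpa only [evnorm_eq_norm_toLp, toLp_add] using norm_add_le _ _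

lemma evnorm_mulVec_le (M : Matrix (Fin N) (Fin N) ℝ) (v : Fin N → ℝ) :
    evnorm (M *ᵥ v) ≤ opNorm M * evnorm v := by
  simpa only [evnorm_eq_norm_toLp, opNorm, toEuclideanCLM_toLp] using
    (toEuclideanCLM (𝕜 := ℝ) M).le_opNorm (toLp 2 v)

lemma evnorm_le_sqrt_mul_of_abs_le {v : Fin N → ℝ} {ε : ℝ} (hε : 0 ≤ ε)
    (hv : ∀ i, |v i| ≤ ε) : evnorm v ≤ Real.sqrt N * ε := by
  rw [evnorm, ← Real.sqrt_sq hε, ← Real.sqrt_mul N.cast_nonneg]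
  refine Real.sqrt_le_sqrt ?_
  calc ∑ i, v i ^ 2 ≤ ∑ _i : Fin N, ε ^ 2 :=
        Finset.sum_le_sum fun i _ => sq_le_sq' (abs_le.mp (hv i)).1 (abs_le.mp (hv i)).2
    _ = N * ε ^ 2 := by simp

end EuclideanNorm

lemma Matrix.PosSemidef.posDef_add_smul_one {n : Type*} [DecidableEq n] {M : Matrix n n ℝ}
    (hM : M.PosSemidef) {μ : ℝ} (hμ : 0 < μ) : (M + μ • 1).PosDef :=
  PosDef.posSemidef_add hM (PosDef.one.smul hμ)

section PositiveMatrices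

variable {n : Type*} [Fintype n]

lemma posSemidef_of_isSymm {M : Matrix n n ℝ} (hsymm : M.IsSymm)
    (hM : ∀ v, 0 ≤ v ⬝ᵥ M *ᵥ v) : M.PosSemidef :=
  .of_dotProduct_mulVec_nonneg (isHermitian_iff_isSymm.mpr hsymm) (by simpa using hM)

lemma abs_dotProduct_mulVec_le_of_abs_le {D : Matrix n n ℝ} {ε : ℝ} (hε : 0 ≤ ε)
    (hD : ∀ i j, |D i j| ≤ ε) (v : n → ℝ) :
    |v ⬝ᵥ D *ᵥ v| ≤ Fintype.card n * ε * (v ⬝ᵥ v) :=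
  calc |v ⬝ᵥ D *ᵥ v| = |∑ i, ∑ j, v i * D i j * v j| := by
        simp only [dotProduct, mulVec, Finset.mul_sum, mul_assoc]
    _ ≤ ∑ i, ∑ j, |v i| * ε * |v j| := by
        refine (Finset.abs_sum_le_sum_abs _ _).trans (Finset.sum_le_sum fun i _ =>
          (Finset.abs_sum_le_sum_abs _ _).trans (Finset.sum_le_sum fun j _ => ?_))
        rw [abs_mul, abs_mul]
        gcongr
        exact hD i j
    _ = ε * (∑ i, |v i|) ^ 2 := by
        rw [sq, Finset.sum_mul_sum, Finset.mul_sum]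
        simp only [Finset.mul_sum]
        exact Finset.sum_congr rfl fun i _ => Finset.sum_congr rfl fun j _ => by ring
    _ ≤ ε * (Fintype.card n * ∑ i, |v i| ^ 2) := by
        gcongr
        exact sq_sum_le_card_mul_sum_sq
    _ = Fintype.card n * ε * (v ⬝ᵥ v) := by
        simp only [dotProduct, sq_abs, ← sq]
        ring

variable [DecidableEq n]

lemma posSemidef_sub_add_smul_one_of_abs_sub_le {A B : Matrix n n ℝ} (hA : A.IsSymm)
    (hB : B.IsSymm) {ε : ℝ} (hε : 0 ≤ ε) (hAB : ∀ i j, |A i j - B i j| ≤ ε) :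
    (B - A + (Fintype.card n * ε) • 1).PosSemidef := by
  refine posSemidef_of_isSymm ?_ fun v => ?_
  · simp only [IsSymm, transpose_add, transpose_sub, transpose_smul, transpose_one, hA.eq, hB.eq]
  · have hBA := abs_dotProduct_mulVec_le_of_abs_le (D := B - A) hε
      (fun i j => by simpa [abs_sub_comm] using hAB i j) v
    rw [add_mulVec, dotProduct_add, smul_mulVec, one_mulVec, dotProduct_smul, smul_eq_mul]
    linarith [(abs_le.mp hBA).1]

open scoped Pointwise in
lemma one_le_det_one_add {Q : Matrix n n ℝ} (hQ : Q.PosSemidef) : 1 ≤ (1 + Q).det := by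
  have h : (1 + Q).IsHermitian := isHermitian_one.add hQ.isHermitian
  rw [h.det_eq_prod_eigenvalues]
  refine Finset.one_le_prod fun i _ => ?_
  have hspec : spectrum ℝ (1 + Q) = ({1} : Set ℝ) + spectrum ℝ Q := by
    simpa using (spectrum.singleton_add_eq Q (1 : ℝ)).symm
  have hi : h.eigenvalues i ∈ ({1} : Set ℝ) + spectrum ℝ Q :=
    hspec ▸ h.eigenvalues_mem_spectrum_real i
  obtain ⟨_, rfl, μ, hμ, hsum⟩ := Set.mem_add.mp hi
  have hμ0 : 0 ≤ μ := (posSemidef_iff_isHermitian_and_spectrum_nonneg.mp hQ).2 hμ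
  simp only [RCLike.ofReal_real_eq_id, id_eq, ← hsum]
  linarith

open scoped MatrixOrder in
/-- Writing `M = S²` with `S = √M`, `M + P = S (1 + S⁻¹ P S⁻¹) S`. -/
lemma Matrix.PosDef.det_le_det_add {M P : Matrix n n ℝ} (hM : M.PosDef) (hP : P.PosSemidef) :
    M.det ≤ (M + P).det := by
  set S := CFC.sqrt M
  have hSS : S * S = M := CFC.sqrt_mul_sqrt_self M hM.posSemidef.nonneg
  have hSu : IsUnit S.det := by
    refine isUnit_iff_ne_zero.mpr fun h0 => hM.det_pos.ne' ?_
    rw [← hSS, det_mul, h0, zero_mul]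
  have hQ : (S⁻¹ * P * S⁻¹).PosSemidef := by
    have h := hP.conjTranspose_mul_mul_same S⁻¹
    rwa [(CFC.sqrt_nonneg M).posSemidef.isHermitian.inv.eq] at h
  have hdecomp : M + P = S * (1 + S⁻¹ * P * S⁻¹) * S := by
    rw [mul_add, mul_one, add_mul, hSS, ← mul_assoc, ← mul_assoc, mul_nonsing_inv _ hSu,
      one_mul, mul_assoc, nonsing_inv_mul _ hSu, mul_one]
  have hdetS : S.det * S.det = M.det := by rw [← det_mul, hSS]
  rw [hdecomp, det_mul, det_mul]
  nlinarith [one_le_det_one_add hQ, hM.det_pos]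

end PositiveMatrices

lemma det_add_smul_one_le_of_abs_sub_le {n : Type*} [Fintype n] [DecidableEq n]
    {A B : Matrix n n ℝ} (hA : A.PosSemidef) (hB : B.IsSymm) {ε : ℝ} (hε : 0 ≤ ε)
    (hAB : ∀ i j, |A i j - B i j| ≤ ε) {μ : ℝ} (hμ : 0 < μ) :
    (A + μ • 1).det ≤ (B + (Fintype.card n * ε + μ) • 1).det :=
  calc (A + μ • 1).det ≤ (A + μ • 1 + (B - A + (Fintype.card n * ε) • 1)).det :=
        (hA.posDef_add_smul_one hμ).det_le_det_add
          (posSemidef_sub_add_smul_one_of_abs_sub_le (isHermitian_iff_isSymm.mp hA.isHermitian)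
            hB hε hAB)
    _ = (B + (Fintype.card n * ε + μ) • 1).det := by
        rw [add_smul]
        abel_nf

section Perturbation

variable {N : ℕ}

lemma evnorm_inv_add_smul_one_mulVec_le {M : Matrix (Fin N) (Fin N) ℝ} (hM : M.PosSemidef)
    {lam : ℝ} (hlam : 0 < lam) (y : Fin N → ℝ) :
    evnorm ((M + lam • 1)⁻¹ *ᵥ y) ≤ evnorm y / lam := by
  set w := (M + lam • 1)⁻¹ *ᵥ y
  have hunit : IsUnit (M + lam • 1).det := (hM.posDef_add_smul_one hlam).det_pos.ne'.isUnit
  have hw : (M + lam • 1) *ᵥ w = y := by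
    rw [mulVec_mulVec, mul_nonsing_inv _ hunit, one_mulVec]
  have key : lam * evnorm w ^ 2 ≤ evnorm w * evnorm y :=
    calc lam * evnorm w ^ 2 ≤ w ⬝ᵥ M *ᵥ w + lam * (w ⬝ᵥ w) := by
          rw [dotProduct_self_eq_evnorm_sq]
          linarith [show 0 ≤ w ⬝ᵥ M *ᵥ w by simpa using hM.dotProduct_mulVec_nonneg w]
      _ = w ⬝ᵥ y := by
          rw [← hw, add_mulVec, dotProduct_add, smul_mulVec, one_mulVec, dotProduct_smul,
            smul_eq_mul]
      _ ≤ evnorm w * evnorm y := (le_abs_self _).trans (abs_dotProduct_le_evnorm_mul _ _)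
  rw [le_div_iff₀ hlam]
  nlinarith [evnorm_nonneg w, evnorm_nonneg y]

lemma evnorm_le_add_sqrt_mul_of_abs_sub_le {u v : Fin N → ℝ} {ε : ℝ} (hε : 0 ≤ ε)
    (huv : ∀ i, |u i - v i| ≤ ε) : evnorm u ≤ evnorm v + Real.sqrt N * ε :=
  calc evnorm u = evnorm (v + (u - v)) := by rw [add_sub_cancel]
    _ ≤ evnorm v + evnorm (u - v) := evnorm_add_le _ _
    _ ≤ evnorm v + Real.sqrt N * ε := by
        gcongr
        exact evnorm_le_sqrt_mul_of_abs_le hε huv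

variable {K Kt : Matrix (Fin N) (Fin N) ℝ} {k kt : Fin N → ℝ} {lam ε : ℝ}

lemma opNorm_mul_le_Cbound (hlam : 0 ≤ lam) (hε : 0 ≤ ε) :
    opNorm (K + lam • 1)⁻¹ * (evnorm k + Real.sqrt N * ε) ≤ Cbound K k lam ε := by
  have : 0 ≤ opNorm (K + lam • 1)⁻¹ * (Real.sqrt N * ε) := by unfold opNorm; positivity
  have : 0 ≤ 1 / lam * (evnorm k + Real.sqrt N * ε) := by
    have := evnorm_nonneg k
    positivity
  unfold Cbound
  linarith

lemma posteriorVariance_le_add_Ssq (hKt : Kt.PosSemidef) (hlam : 0 < lam) (hε : 0 ≤ ε)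
    {c ct : ℝ} (hc : |c - ct| ≤ ε) :
    ct - kt ⬝ᵥ ((Kt + lam • 1)⁻¹ *ᵥ kt) ≤
      (c - k ⬝ᵥ ((K + lam • 1)⁻¹ *ᵥ k)) + Ssq K k lam ε := by
  have hkt : 0 ≤ kt ⬝ᵥ ((Kt + lam • 1)⁻¹ *ᵥ kt) := by
    simpa using (hKt.posDef_add_smul_one hlam).inv.posSemidef.dotProduct_mulVec_nonneg kt
  have hC := opNorm_mul_le_Cbound (K := K) (k := k) hlam.le hε
  have hsqrt : 0 ≤ Real.sqrt N * ε := by positivity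
  have hk : k ⬝ᵥ ((K + lam • 1)⁻¹ *ᵥ k) ≤ evnorm k * Cbound K k lam ε :=
    calc k ⬝ᵥ ((K + lam • 1)⁻¹ *ᵥ k)
        ≤ evnorm k * (opNorm (K + lam • 1)⁻¹ * evnorm k) :=
          (le_abs_self _).trans ((abs_dotProduct_le_evnorm_mul _ _).trans
            (mul_le_mul_of_nonneg_left (evnorm_mulVec_le _ _) (evnorm_nonneg k)))
      _ ≤ evnorm k * Cbound K k lam ε := by
          gcongr
          · exact evnorm_nonneg k
          · refine le_trans ?_ hC
            gcongr
            · exact norm_nonneg _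
            · linarith
  have hC0 : 0 ≤ Cbound K k lam ε :=
    le_trans (mul_nonneg (norm_nonneg _) (add_nonneg (evnorm_nonneg k) hsqrt)) hC
  have hS : ε + evnorm k * Cbound K k lam ε ≤ Ssq K k lam ε := by
    unfold Ssq
    nlinarith [evnorm_nonneg ((K + lam • 1)⁻¹ *ᵥ k)]
  linarith [(abs_le.mp hc).1]

lemma abs_mean_add_abs_mean_le (hKt : Kt.PosSemidef) (hlam : 0 < lam) (hε : 0 ≤ ε)
    (hk : ∀ i, |kt i - k i| ≤ ε) (y : Fin N → ℝ) :
    |k ⬝ᵥ ((K + lam • 1)⁻¹ *ᵥ y)| + |kt ⬝ᵥ ((Kt + lam • 1)⁻¹ *ᵥ y)| ≤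
      Cbound K k lam ε * evnorm y := by
  have hmean : |k ⬝ᵥ ((K + lam • 1)⁻¹ *ᵥ y)| ≤
      evnorm k * (opNorm (K + lam • 1)⁻¹ * evnorm y) :=
    (abs_dotProduct_le_evnorm_mul _ _).trans
      (mul_le_mul_of_nonneg_left (evnorm_mulVec_le _ _) (evnorm_nonneg k))
  have hmean_t : |kt ⬝ᵥ ((Kt + lam • 1)⁻¹ *ᵥ y)| ≤
      (evnorm k + Real.sqrt N * ε) * (evnorm y / lam) :=
    (abs_dotProduct_le_evnorm_mul _ _).trans
      (mul_le_mul (evnorm_le_add_sqrt_mul_of_abs_sub_le hε hk)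
        (evnorm_inv_add_smul_one_mulVec_le hKt hlam y) (evnorm_nonneg _)
        (add_nonneg (evnorm_nonneg k) (by positivity)))
  have : 0 ≤ opNorm (K + lam • 1)⁻¹ * (Real.sqrt N * ε) * evnorm y := by
    have := evnorm_nonneg y
    unfold opNorm
    positivity
  unfold Cbound
  rw [div_eq_mul_one_div (evnorm y)] at hmean_t
  nlinarith

end Perturbation

theorem stmt_10_general {N : ℕ} (K Kt : Matrix (Fin N) (Fin N) ℝ)
    (hKsymm : K.IsSymm) (hKtsymm : Kt.IsSymm)
    (hKtpsd : ∀ v : Fin N → ℝ, 0 ≤ v ⬝ᵥ Kt *ᵥ v)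
    (ε : ℝ) (hε : 0 ≤ ε) (hentry : ∀ i j, |Kt i j - K i j| ≤ ε)
    (lam : ℝ) (hlam : 0 < lam)
    (k kt : Fin N → ℝ) (hk : ∀ i, |kt i - k i| ≤ ε)
    (c ct : ℝ) (hc : |c - ct| ≤ ε)
    (y : Fin N → ℝ) (f : ℝ) (B R : ℝ) (hB : 0 ≤ B) (hR : 0 ≤ R)
    (δ : ℝ)
    (hbound : |kt ⬝ᵥ ((Kt + lam • 1)⁻¹ *ᵥ y) - f| ≤
      (B + R * Real.sqrt (Real.log (Kt + lam • 1).det - 2 * Real.log δ)) *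
        Real.sqrt (ct - kt ⬝ᵥ ((Kt + lam • 1)⁻¹ *ᵥ kt))) :
    |k ⬝ᵥ ((K + lam • 1)⁻¹ *ᵥ y) - f| ≤
      (B + R * Real.sqrt (Real.log (K + (N * ε + lam) • 1).det - 2 * Real.log δ)) *
          Real.sqrt ((c - k ⬝ᵥ ((K + lam • 1)⁻¹ *ᵥ k)) + Ssq K k lam ε) +
        Cbound K k lam ε * evnorm y := by
  have hKt : Kt.PosSemidef := posSemidef_of_isSymm hKtsymm hKtpsd
  have hdet : (Kt + lam • 1).det ≤ (K + (N * ε + lam) • 1).det := by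
    simpa using det_add_smul_one_le_of_abs_sub_le hKt hKsymm hε hentry hlam
  have hβ : B + R * Real.sqrt (Real.log (Kt + lam • 1).det - 2 * Real.log δ) ≤
      B + R * Real.sqrt (Real.log (K + (N * ε + lam) • 1).det - 2 * Real.log δ) := by
    gcongr
    exact (hKt.posDef_add_smul_one hlam).det_pos
  have hσ := posteriorVariance_le_add_Ssq (K := K) (k := k) (kt := kt) hKt hlam hε hc
  calc |k ⬝ᵥ ((K + lam • 1)⁻¹ *ᵥ y) - f|
      ≤ (|k ⬝ᵥ ((K + lam • 1)⁻¹ *ᵥ y)| + |kt ⬝ᵥ ((Kt + lam • 1)⁻¹ *ᵥ y)|) +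
          |kt ⬝ᵥ ((Kt + lam • 1)⁻¹ *ᵥ y) - f| :=
        (abs_sub_le _ _ _).trans (by gcongr; exact abs_sub _ _)
    _ ≤ Cbound K k lam ε * evnorm y +
          (B + R * Real.sqrt (Real.log (K + (N * ε + lam) • 1).det - 2 * Real.log δ)) *
            Real.sqrt ((c - k ⬝ᵥ ((K + lam • 1)⁻¹ *ᵥ k)) + Ssq K k lam ε) := by
        gcongr ?_ + ?_
        · exact abs_mean_add_abs_mean_le hKt hlam hε hk y
        · exact hbound.trans (mul_le_mul hβ (Real.sqrt_le_sqrt hσ) (Real.sqrt_nonneg _)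
            (by positivity))
    _ = _ := add_comm _ _

theorem stmt_10 {N : ℕ} (hN : 0 < N) (K Kt : Matrix (Fin N) (Fin N) ℝ)
    (hKsymm : K.IsSymm) (hKtsymm : Kt.IsSymm)
    (hKpsd : ∀ v : Fin N → ℝ, 0 ≤ v ⬝ᵥ K *ᵥ v)
    (hKtpsd : ∀ v : Fin N → ℝ, 0 ≤ v ⬝ᵥ Kt *ᵥ v)
    (ε : ℝ) (hε : 0 ≤ ε) (hentry : ∀ i j, |Kt i j - K i j| ≤ ε)
    (lam : ℝ) (hlam : 0 < lam)
    (k kt : Fin N → ℝ) (hk : ∀ i, |kt i - k i| ≤ ε)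
    (c ct : ℝ) (hc : |c - ct| ≤ ε)
    (y : Fin N → ℝ) (f : ℝ) (B R : ℝ) (hB : 0 ≤ B) (hR : 0 ≤ R)
    (δ : ℝ) (hδ : δ ∈ Set.Ioo (0 : ℝ) 1)
    (hvar : 0 ≤ ct - kt ⬝ᵥ ((Kt + lam • 1)⁻¹ *ᵥ kt))
    (hlog : 0 ≤ Real.log (Kt + lam • 1).det - 2 * Real.log δ)
    (hbound : |kt ⬝ᵥ ((Kt + lam • 1)⁻¹ *ᵥ y) - f| ≤
      (B + R * Real.sqrt (Real.log (Kt + lam • 1).det - 2 * Real.log δ)) *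
        Real.sqrt (ct - kt ⬝ᵥ ((Kt + lam • 1)⁻¹ *ᵥ kt))) :
    |k ⬝ᵥ ((K + lam • 1)⁻¹ *ᵥ y) - f| ≤
      (B + R * Real.sqrt (Real.log (K + (N * ε + lam) • 1).det - 2 * Real.log δ)) *
          Real.sqrt ((c - k ⬝ᵥ ((K + lam • 1)⁻¹ *ᵥ k)) + Ssq K k lam ε) +
        Cbound K k lam ε * evnorm y :=
  stmt_10_general K Kt hKsymm hKtsymm hKtpsd ε hε hentry lam hlam k kt hk c ct hc y f B R hB hR δ
    hbound
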